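/- Let n₁ ≥ n₂ ≥ ... ≥ n_k ≥ 1 be integers and let s ≥ 1 be an integer. For each i define d_i as the least integer d with C(d+n_i, n_i) ≥ s, and set D = max{d₁+1, ..., d_k+1}. Then for any tuple (t₁, ..., t_k) of nonnegative integers with t₁ + ... + t_k = D - 1, the product C(t₁+n₁, n₁) · C(t₂+n₂, n₂) · ... · C(t_k+n_k, n_k) is at least s. -/

import Mathlib

/-!
Let `j` be an index with `n j` minimal. Since `C(t + m, m)` increases with `m`, the
threshold `d j` is the largest of the `d i`, so `D - 1 = d j`. The inequality
`C(a + b + m, m) ≤ C(a + m, m) * C(b + m, m)` (split a monomial of degree `≤ a + b` in `m`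
variables into one of degree `≤ a` and one of degree `≤ b`) then gives
`s ≤ C(∑ tᵢ + n j, n j) ≤ ∏ C(tᵢ + n j, n j) ≤ ∏ C(tᵢ + nᵢ, nᵢ)`.
-/

namespace Nat

theorem add_add_choose_le_mul (a b m : ℕ) :
    (a + b + m).choose m ≤ (a + m).choose m * (b + m).choose m := by
  induction m with
  | zero => simp
  | succ m ih =>
    -- multiply through by `(m + 1)²` and use `(n + 1) C(n, m) = C(n + 1, m + 1) (m + 1)`
    simp only [← add_assoc]
    refine Nat.le_of_mul_le_mul_right (c := (m + 1) * (m + 1)) ?_ (by positivity)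
    have hlin : (a + b + m + 1) * (m + 1) ≤ (a + m + 1) * (b + m + 1) := by nlinarith
    calc (a + b + m + 1).choose (m + 1) * ((m + 1) * (m + 1))
        = (a + b + m + 1) * (a + b + m).choose m * (m + 1) := by
          rw [add_one_mul_choose_eq]; ring
      _ ≤ (a + b + m + 1) * (m + 1) * ((a + m).choose m * (b + m).choose m) := by
          rw [mul_right_comm]; gcongr
      _ ≤ (a + m + 1) * (b + m + 1) * ((a + m).choose m * (b + m).choose m) := by gcongr
      _ = (a + m + 1) * (a + m).choose m * ((b + m + 1) * (b + m).choose m) := by ring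
      _ = (a + m + 1).choose (m + 1) * (b + m + 1).choose (m + 1) * ((m + 1) * (m + 1)) := by
          rw [add_one_mul_choose_eq, add_one_mul_choose_eq]; ring

theorem sum_add_choose_le_prod {ι : Type*} (s : Finset ι) (t : ι → ℕ) (m : ℕ) :
    (∑ i ∈ s, t i + m).choose m ≤ ∏ i ∈ s, (t i + m).choose m := by
  induction s using Finset.cons_induction with
  | empty => simp
  | cons j s _ ih =>
    rw [Finset.sum_cons, Finset.prod_cons]
    exact (add_add_choose_le_mul _ _ m).trans (Nat.mul_le_mul_left _ ih)

theorem add_choose_self_le_add_choose_self (a : ℕ) {m m' : ℕ} (h : m ≤ m') :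
    (a + m).choose m ≤ (a + m').choose m' := by
  rw [add_comm a m, choose_symm_add, add_comm a m', choose_symm_add]
  exact choose_le_choose a (by omega)

end Nat

theorem le_of_isLeast_add_choose {s m m' e e' : ℕ} (hm : m ≤ m')
    (he : IsLeast {d : ℕ | s ≤ (d + m).choose m} e)
    (he' : IsLeast {d : ℕ | s ≤ (d + m').choose m'} e') : e' ≤ e :=
  he'.2 (he.1.trans (Nat.add_choose_self_le_add_choose_self e hm))

theorem prod_choose_ge_of_sum_eq_D_sub_one_general (k s : ℕ)
    (n : Fin k → ℕ)
    (d : Fin k → ℕ) (hd : ∀ i, IsLeast {d' : ℕ | s ≤ (d' + n i).choose (n i)} (d i))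
    (D : ℕ) (hD : IsGreatest (Set.range fun i => d i + 1) D)
    (t : Fin k → ℕ) (ht : ∑ i, t i = D - 1) :
    s ≤ ∏ i, (t i + n i).choose (n i) := by
  obtain ⟨i₀, -⟩ := hD.1
  have : Nonempty (Fin k) := ⟨i₀⟩
  obtain ⟨j, hj⟩ := Finite.exists_min n
  have hD_eq : D = d j + 1 := hD.unique
    ⟨⟨j, rfl⟩, by
      rintro _ ⟨i, rfl⟩
      exact Nat.add_le_add_right (le_of_isLeast_add_choose (hj i) (hd j) (hd i)) 1⟩
  have hsum : ∑ i, t i = d j := by rw [ht, hD_eq, Nat.add_sub_cancel]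
  calc s ≤ (d j + n j).choose (n j) := (hd j).1
    _ = (∑ i, t i + n j).choose (n j) := by rw [hsum]
    _ ≤ ∏ i, (t i + n j).choose (n j) := Nat.sum_add_choose_le_prod _ t (n j)
    _ ≤ ∏ i, (t i + n i).choose (n i) :=
      Finset.prod_le_prod' fun i _ => Nat.add_choose_self_le_add_choose_self (t i) (hj i)

/-- Let `n₁ ≥ ⋯ ≥ n_k ≥ 1` and `s ≥ 1`.  Let `d i` be the least `d` with
`C(d + nᵢ, nᵢ) ≥ s` and `D = max (d i + 1)`.  Then for any tuple `t` of nonnegative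
integers with `∑ t i = D - 1`, we have `∏ C(tᵢ + nᵢ, nᵢ) ≥ s`. -/
theorem prod_choose_ge_of_sum_eq_D_sub_one (k s : ℕ) (hk : 1 ≤ k) (hs : 1 ≤ s)
    (n : Fin k → ℕ) (hn : ∀ i, 1 ≤ n i) (hmono : Antitone n)
    (d : Fin k → ℕ) (hd : ∀ i, IsLeast {d' : ℕ | s ≤ (d' + n i).choose (n i)} (d i))
    (D : ℕ) (hD : IsGreatest (Set.range fun i => d i + 1) D)
    (t : Fin k → ℕ) (ht : ∑ i, t i = D - 1) :
    s ≤ ∏ i, (t i + n i).choose (n i) :=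
  prod_choose_ge_of_sum_eq_D_sub_one_general k s n d hd D hD t ht
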